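/- arXiv:1210.2690 — 8 statements merged into one kernel-verified Lean document; each statement's English description precedes it below -/
import Mathlib

section
/- Fix integers n ≥ 2 and d ≥ 3, and let h = z_0·z_1^{d-1} + z_1·z_2^{d-1} + (z_3^d + ⋯ + z_n^d) in the polynomial ring ℂ[z_0, …, z_n] (the sum z_3^d + ⋯ + z_n^d is empty when n = 2). Then a vector v ∈ ℂ^{n+1} is a common zero of all n+1 partial derivatives ∂h/∂z_0, …, ∂h/∂z_n if and only if v_1 = v_2 = ⋯ = v_n = 0. Consequently the projective hypersurface V(h) ⊆ ℙ^n has exactly one singular point, namely (1 : 0 : ⋯ : 0). -/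
/-!
A partial derivative of a multiple of `X b ^ m` with `m ≥ 2` vanishes wherever `X b` does. As
`d - 1 ≥ 2`, this kills the contribution of `z₀ z₁^{d-1}` once `v₁ = 0` and that of `z₁ z₂^{d-1}`
once `v₂ = 0`, which gives one direction. Conversely `∂₀ h = z₁^{d-1}` forces `v₁ = 0`; then
`∂₁ h(v) = v₂^{d-1}` forces `v₂ = 0`; then `∂ᵢ h(v) = d vᵢ^{d-1}` forces `vᵢ = 0` for `i ≥ 3`.
-/

open MvPolynomial

namespace MvPolynomial

variable {σ R : Type*}

theorem eval_pderiv_mul_X_pow_eq_zero [CommSemiring R] (p : MvPolynomial σ R) {b : σ} {m : ℕ}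
    (hm : 2 ≤ m) {v : σ → R} (hv : v b = 0) (k : σ) :
    eval v (pderiv k (p * X b ^ m)) = 0 := by
  simp [hv, zero_pow (by omega : m ≠ 0), zero_pow (by omega : m - 1 ≠ 0)]

theorem pderiv_sum_X_pow [CommSemiring R] [DecidableEq σ] (s : Finset σ) (d : ℕ) (k : σ) :
    pderiv k (∑ i ∈ s, X i ^ d : MvPolynomial σ R) =
      if k ∈ s then (d : MvPolynomial σ R) * X k ^ (d - 1) else 0 := by
  simp [Pi.single_apply]

theorem forall_eval_pderiv_eq_zero_iff {K : Type*} [CommRing K] [IsDomain K] [CharZero K]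
    {a b c : σ} (hab : a ≠ b) (hac : a ≠ c) {s : Finset σ} (ha : a ∉ s) (hb : b ∉ s)
    {d : ℕ} (hd : 3 ≤ d) (v : σ → K) :
    (∀ k, eval v (pderiv k (X a * X b ^ (d - 1) + X b * X c ^ (d - 1) + ∑ i ∈ s, X i ^ d)) = 0)
      ↔ v b = 0 ∧ v c = 0 ∧ ∀ i ∈ s, v i = 0 := by
  classical
  have hvanish (p : MvPolynomial σ K) {b : σ} (hv : v b = 0) (k : σ) :=
    eval_pderiv_mul_X_pow_eq_zero p (m := d - 1) (by omega) hv k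
  have hd1 : d - 1 ≠ 0 := by omega
  simp only [map_add, pderiv_sum_X_pow]
  constructor
  · intro H
    have hvb : v b = 0 := by
      simpa [if_neg ha, hab.symm, hac.symm, hd1] using H a
    have hvc : v c = 0 := by
      have H_b := H b
      rw [hvanish (X a) hvb, if_neg hb] at H_b
      simpa [hvb, hd1] using H_b
    refine ⟨hvb, hvc, fun i hi => ?_⟩
    have H_i := H i
    rw [hvanish (X a) hvb, hvanish (X b) hvc, if_pos hi] at H_i
    simpa [hd1, show d ≠ 0 by omega] using H_i
  · rintro ⟨hvb, hvc, hvs⟩ k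
    rw [hvanish (X a) hvb, hvanish (X b) hvc]
    split_ifs with hk
    · simp [hvs k hk, hd1]
    · simp

end MvPolynomial

theorem Fin.eq_one_or_eq_two_or_three_le_of_ne_zero {n : ℕ} (hn : 2 ≤ n) {i : Fin (n + 1)}
    (hi : i ≠ 0) : i = 1 ∨ i = 2 ∨ 3 ≤ (i : ℕ) := by
  have h1 : 1 % (n + 1) = 1 := Nat.mod_eq_of_lt (by omega)
  have h2 : 2 % (n + 1) = 2 := Nat.mod_eq_of_lt (by omega)
  rw [Ne, Fin.ext_iff, Fin.val_zero] at hi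
  simp only [Fin.ext_iff, Fin.coe_ofNat_eq_mod, h1, h2]
  omega

/-- The hypersurface of Proposition 17: the common zeros of the partial derivatives of
`h = z₀ z₁^{d-1} + z₁ z₂^{d-1} + (z₃^d + ⋯ + zₙ^d)` are exactly the vectors with
`v₁ = ⋯ = vₙ = 0`, so `V(h)` has exactly one singular point `(1 : 0 : ⋯ : 0)`. -/
theorem stmt_1 (n d : ℕ) (hn : 2 ≤ n) (hd : 3 ≤ d)
    (h : MvPolynomial (Fin (n + 1)) ℂ)
    (hh : h = X 0 * X 1 ^ (d - 1) + X 1 * X 2 ^ (d - 1) +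
        ∑ i ∈ Finset.univ.filter (fun i : Fin (n + 1) => 3 ≤ (i : ℕ)), X i ^ d)
    (v : Fin (n + 1) → ℂ) :
    (∀ i : Fin (n + 1), eval v (pderiv i h) = 0) ↔
      (∀ i : Fin (n + 1), i ≠ 0 → v i = 0) := by
  have h1 : 1 % (n + 1) = 1 := Nat.mod_eq_of_lt (by omega)
  have h01 : (0 : Fin (n + 1)) ≠ 1 := by simp [Fin.ext_iff, h1]
  have h02 : (0 : Fin (n + 1)) ≠ 2 := by simp [Fin.ext_iff, Nat.mod_eq_of_lt (by omega : 2 < n + 1)]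
  subst hh
  rw [forall_eval_pderiv_eq_zero_iff h01 h02 (by simp) (by simp [h1]) hd]
  constructor
  · rintro ⟨hv1, hv2, hvs⟩ i hi
    obtain rfl | rfl | h3 := Fin.eq_one_or_eq_two_or_three_le_of_ne_zero hn hi
    exacts [hv1, hv2, hvs i (by simpa using h3)]
  · intro H
    refine ⟨H 1 h01.symm, H 2 h02.symm, fun i hi => H i ?_⟩
    rintro rfl
    simp at hi
end

section
/- Fix integers n ≥ 2 and d ≥ 3, and let f = x_1^{d-1} + x_1·x_2^{d-1} + (x_3^d + ⋯ + x_n^d) in ℂ[x_1, …, x_n] (the sum x_3^d + ⋯ + x_n^d is empty when n = 2). Let J(f) be the ideal of ℂ[x_1, …, x_n] generated by the partial derivatives ∂f/∂x_1, …, ∂f/∂x_n. Then the quotient ring ℂ[x_1, …, x_n]/J(f) is a finite-dimensional ℂ-vector space of dimension (d−1)^n − (d−1)^{n-1} + (d−1)^{n-2}. -/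
/-!
Write `x = x₁`, `y = x₂`, `a = d - 1 = m + 2`, and call the remaining variables tail variables.
The Jacobian ideal is generated by `a x^(a-1) + y^a`, `a x y^(a-1)` and `(a+1) z^a` for the tail
variables `z`. Using `x^(a-1) y^j ≡ -a⁻¹ y^(j+a)`, every monomial reduces modulo these generators
to a multiple of a standard one `x^i y^j ∏ z^(c_z)`: all `c_z ≤ a - 1`, and either `i = 0` and
`j ≤ 2a - 2`, or `1 ≤ i ≤ a - 2` and `j ≤ a - 2`. The standard monomials stay independent in the
quotient because the linear map sending every monomial to its normal form kills all multiples of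
the generators. Hence the dimension is `(a² - a + 1) a^(n-2)`.
-/

open MvPolynomial
open Finsupp (single)

noncomputable def Module.Basis.quotientOfKerEqOfRangeEq {ι R M M' : Type*} [Ring R]
    [AddCommGroup M] [Module R M] [AddCommGroup M'] [Module R M'] {N : Submodule R M}
    {w : ι → M'} (hw : LinearIndependent R w) (φ : M →ₗ[R] M') (hker : LinearMap.ker φ = N)
    (hrange : LinearMap.range φ = Submodule.span R (Set.range w)) : Module.Basis ι R (M ⧸ N) :=
  ((Module.Basis.span hw).map (LinearEquiv.ofEq _ _ hrange.symm)).map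
    (φ.quotKerEquivRange.symm ≪≫ₗ Submodule.quotEquivOfEq _ _ hker)

namespace MvPolynomial

variable {σ K : Type*}

variable (σ) in
noncomputable def jacobianIdeal [CommSemiring K] (f : MvPolynomial σ K) :
    Ideal (MvPolynomial σ K) :=
  Ideal.span (Set.range fun i => pderiv i f)

theorem map_eq_zero_of_mem_ideal_span {M : Type*} [CommSemiring K] [AddCommMonoid M] [Module K M]
    {s : Set (MvPolynomial σ K)} (φ : MvPolynomial σ K →ₗ[K] M)
    (h : ∀ e, ∀ g ∈ s, φ (monomial e 1 * g) = 0) {p : MvPolynomial σ K}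
    (hp : p ∈ Ideal.span s) : φ p = 0 := by
  suffices ∀ e, φ (monomial e 1 * p) = 0 by simpa using this 0
  induction hp using Submodule.span_induction with
  | mem g hg => exact fun e => h e g hg
  | zero => simp
  | add a b _ _ ha hb => intro e; rw [mul_add, map_add, ha, hb, add_zero]
  | smul q a _ ha =>
    intro e
    induction q using MvPolynomial.induction_on' with
    | monomial u c =>
      have hc : monomial (e + u) c = c • monomial (e + u) (1 : K) := by
        rw [smul_monomial, smul_eq_mul, mul_one]
      rw [smul_eq_mul, ← mul_assoc, monomial_mul, one_mul, hc, smul_mul_assoc, map_smul, ha,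
        smul_zero]
    | add q r hq hr => rw [add_smul, mul_add, map_add, hq, hr, add_zero]

theorem ker_le_of_monomial_sub_mem [CommRing K] {I : Submodule K (MvPolynomial σ K)}
    (φ : MvPolynomial σ K →ₗ[K] MvPolynomial σ K)
    (h : ∀ e, monomial e 1 - φ (monomial e 1) ∈ I) : LinearMap.ker φ ≤ I := by
  have key : ∀ p, p - φ p ∈ I := by
    intro p
    induction p using MvPolynomial.induction_on' with
    | monomial e c =>
      have hc : monomial e c = c • monomial e (1 : K) := by
        rw [smul_monomial, smul_eq_mul, mul_one]
      rw [hc, map_smul, ← smul_sub]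
      exact I.smul_mem c (h e)
    | add p q hp hq => simpa only [map_add, add_sub_add_comm] using I.add_mem hp hq
  intro p hp
  simpa [LinearMap.mem_ker.1 hp] using key p

end MvPolynomial

namespace ChainSingularity

variable {σ K : Type*} (m : ℕ) (x y : σ)

def box : Finset (ℕ × ℕ) :=
  {0} ×ˢ Finset.range (2 * m + 3) ∪ Finset.Icc 1 m ×ˢ Finset.range (m + 1)

theorem mem_box {i j : ℕ} :
    (i, j) ∈ box m ↔ i = 0 ∧ j ≤ 2 * m + 2 ∨ 1 ≤ i ∧ i ≤ m ∧ j ≤ m := by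
  simp only [box, Finset.mem_union, Finset.mem_product, Finset.mem_singleton, Finset.mem_range,
    Finset.mem_Icc]
  omega

theorem card_box : (box m).card = m ^ 2 + 3 * m + 3 := by
  rw [box, Finset.card_union_of_disjoint, Finset.card_product, Finset.card_product,
    Finset.card_singleton, Finset.card_range, Finset.card_range, Nat.card_Icc]
  · rw [Nat.add_sub_cancel]; ring
  · rw [Finset.disjoint_left]
    rintro ⟨a, b⟩ h1 h2
    simp only [Finset.mem_product, Finset.mem_singleton, Finset.mem_Icc] at h1 h2
    omega

def TailBounded (e : σ →₀ ℕ) : Prop := ∀ i, i ≠ x → i ≠ y → e i ≤ m + 1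

def IsStandard (e : σ →₀ ℕ) : Prop := (e x, e y) ∈ box m ∧ TailBounded m x y e

variable {m x y}

theorem tailBounded_add_single (e : σ →₀ ℕ) {z : σ} (hz : z = x ∨ z = y) (a : ℕ) :
    TailBounded m x y (e + single z a) ↔ TailBounded m x y e := by
  refine forall₂_congr fun i hx => forall_congr' fun hy => ?_
  rw [Finsupp.coe_add, Pi.add_apply, Finsupp.single_eq_of_ne (by rintro rfl; tauto), add_zero]

section Counting

variable [Fintype σ] [DecidableEq σ]

variable (m) in
noncomputable def isStandardEquiv (hxy : x ≠ y) :
    {e // IsStandard m x y e} ≃ box m × ({i // i ≠ x ∧ i ≠ y} → Fin (m + 2)) where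
  toFun e := (⟨(e.1 x, e.1 y), e.2.1⟩, fun i => ⟨e.1 i, Nat.lt_succ_of_le (e.2.2 i i.2.1 i.2.2)⟩)
  invFun p := ⟨Finsupp.equivFunOnFinite.symm fun i =>
      if hi : i ≠ x ∧ i ≠ y then p.2 ⟨i, hi⟩ else if i = x then p.1.1.1 else p.1.1.2, by
    refine ⟨?_, fun i hix hiy => ?_⟩
    · simp [hxy.symm]
    · simpa [hix, hiy] using Nat.le_of_lt_succ (p.2 ⟨i, hix, hiy⟩).2⟩
  left_inv e := by
    ext i
    by_cases hix : i = x
    · subst hix; simp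
    by_cases hiy : i = y
    · subst hiy; simp [hix]
    simp [hix, hiy]
  right_inv p := by
    ext i
    · simp
    · simp [hxy.symm]
    · simp [i.2.1, i.2.2]

theorem natCard_isStandard (hxy : x ≠ y) :
    Nat.card {e // IsStandard m x y e} =
      (m ^ 2 + 3 * m + 3) * (m + 2) ^ (Fintype.card σ - 2) := by
  have htail : Nat.card {i // i ≠ x ∧ i ≠ y} = Fintype.card σ - 2 := by
    rw [Nat.card_eq_fintype_card, Fintype.card_subtype, ← Finset.card_pair hxy,
      ← Finset.card_compl]
    congr 1
    ext i
    simp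
  rw [Nat.card_congr (isStandardEquiv m hxy), Nat.card_prod, Nat.card_fun, htail,
    Nat.card_eq_fintype_card, Fintype.card_coe, card_box, Nat.card_eq_fintype_card,
    Fintype.card_fin]

end Counting

section Rest

variable [DecidableEq σ]

variable (x y) in
def rest (e : σ →₀ ℕ) : σ →₀ ℕ := e.filter fun i => i ≠ x ∧ i ≠ y

theorem rest_add_single (e : σ →₀ ℕ) {z : σ} (hz : z = x ∨ z = y) (a : ℕ) :
    rest x y (e + single z a) = rest x y e := by
  rw [rest, Finsupp.filter_add, Finsupp.filter_single_of_neg _ (by tauto), add_zero, rest]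

theorem rest_apply_left (e : σ →₀ ℕ) : rest x y e x = 0 :=
  Finsupp.filter_apply_neg _ _ (by tauto)

theorem rest_apply_right (e : σ →₀ ℕ) : rest x y e y = 0 :=
  Finsupp.filter_apply_neg _ _ (by tauto)

theorem rest_apply_of_ne (e : σ →₀ ℕ) {i : σ} (hx : i ≠ x) (hy : i ≠ y) : rest x y e i = e i :=
  Finsupp.filter_apply_pos _ _ ⟨hx, hy⟩

theorem monomial_eq_X_pow_mul_X_pow_mul [CommSemiring K] (hxy : x ≠ y) (e : σ →₀ ℕ) (c : K) :
    monomial e c = X x ^ e x * X y ^ e y * monomial (rest x y e) c := by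
  have he : e = single x (e x) + (single y (e y) + rest x y e) := by
    ext i
    simp only [rest, Finsupp.coe_add, Pi.add_apply, Finsupp.single_apply, Finsupp.filter_apply]
    by_cases hx : x = i <;> by_cases hy : y = i <;> simp_all [eq_comm]
  conv_lhs => rw [he]
  rw [monomial_single_add, monomial_single_add, mul_assoc]

end Rest

section Poly

variable [Fintype σ] [DecidableEq σ] [CommSemiring K]

variable (m x y) in
noncomputable def poly : MvPolynomial σ K :=
  X x ^ (m + 2) + X x * X y ^ (m + 2) +
    ∑ i ∈ Finset.univ.filter (fun i => i ≠ x ∧ i ≠ y), X i ^ (m + 3)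

theorem pderiv_sum_tail_eq_zero {z : σ} (hz : z = x ∨ z = y) :
    pderiv z (∑ i ∈ Finset.univ.filter (fun i => i ≠ x ∧ i ≠ y), X i ^ (m + 3) :
      MvPolynomial σ K) = 0 := by
  rw [map_sum]
  refine Finset.sum_eq_zero fun i hi => ?_
  rw [pderiv_pow, pderiv_X_of_ne (by rintro rfl; simp at hi; tauto), mul_zero]

theorem pderiv_poly_left (hxy : x ≠ y) :
    pderiv x (poly (K := K) m x y) = C ((m : K) + 2) * X x ^ (m + 1) + X y ^ (m + 2) := by
  rw [poly, map_add, map_add, pderiv_sum_tail_eq_zero (Or.inl rfl)]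
  simp [map_ofNat, pderiv_X_of_ne hxy.symm]

theorem pderiv_poly_right (hxy : x ≠ y) :
    pderiv y (poly (K := K) m x y) = C ((m : K) + 2) * X x * X y ^ (m + 1) := by
  rw [poly, map_add, map_add, pderiv_sum_tail_eq_zero (Or.inr rfl)]
  simp [map_ofNat, pderiv_X_of_ne hxy]
  ring

theorem pderiv_poly_of_ne {i : σ} (hx : i ≠ x) (hy : i ≠ y) :
    pderiv i (poly (K := K) m x y) = C ((m : K) + 3) * X i ^ (m + 2) := by
  rw [poly, map_add, map_add, map_sum, Finset.sum_eq_single i]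
  · simp [map_ofNat, pderiv_X_of_ne hx.symm, pderiv_X_of_ne hy.symm]
  · intro j _ hj
    rw [pderiv_pow, pderiv_X_of_ne hj, mul_zero]
  · simp [hx, hy]

end Poly

section Field

variable [Field K]

variable (m x y) in
noncomputable def planeNormalForm (i j : ℕ) : MvPolynomial σ K :=
  if (i, j) ∈ box m then X x ^ i * X y ^ j
  else if i = m + 1 ∧ j ≤ m then -C ((m : K) + 2)⁻¹ * X y ^ (j + m + 2)
  else 0

theorem planeNormalForm_add_right (i j : ℕ) :
    planeNormalForm (K := K) m x y (i + 1) (j + (m + 1)) = 0 := by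
  rw [planeNormalForm, if_neg (by rw [mem_box]; omega), if_neg (by omega)]

section CharZero

variable [CharZero K]

variable (m) in
theorem natCast_add_two_ne_zero : (m : K) + 2 ≠ 0 := by
  exact_mod_cast (m + 1).succ_ne_zero

variable (m) in
theorem C_inv_mul_C_natCast_add_two :
    C ((m : K) + 2)⁻¹ * C ((m : K) + 2) = (1 : MvPolynomial σ K) := by
  rw [← C_mul, inv_mul_cancel₀ (natCast_add_two_ne_zero m), C_1]

theorem planeNormalForm_add_left (i j : ℕ) :
    C ((m : K) + 2) * planeNormalForm m x y (i + (m + 1)) j +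
      planeNormalForm m x y i (j + (m + 2)) = 0 := by
  simp only [planeNormalForm, mem_box]
  rcases Nat.eq_zero_or_pos i with rfl | hi
  · by_cases hj : j ≤ m
    · rw [if_neg (by omega), if_pos (by omega), if_pos (by omega), ← mul_assoc, mul_neg,
        ← C_mul, mul_inv_cancel₀ (natCast_add_two_ne_zero m), C_1, pow_zero, one_mul]
      ring
    · rw [if_neg (by omega), if_neg (by omega), if_neg (by omega), if_neg (by omega)]
      ring
  · rw [if_neg (by omega), if_neg (by omega), if_neg (by omega), if_neg (by omega)]
    ring

variable {I : Ideal (MvPolynomial σ K)}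

theorem X_pow_mul_X_pow_mem_of_le (hy : C ((m : K) + 2) * X x * X y ^ (m + 1) ∈ I) {i j : ℕ}
    (hi : 1 ≤ i) (hj : m + 1 ≤ j) : X x ^ i * X y ^ j ∈ I := by
  obtain ⟨i, rfl⟩ := Nat.exists_eq_add_of_le' hi
  obtain ⟨j, rfl⟩ := Nat.exists_eq_add_of_le' hj
  convert I.mul_mem_left (C ((m : K) + 2)⁻¹ * X x ^ i * X y ^ j) hy using 1
  linear_combination (-X x ^ (i + 1) * X y ^ (j + (m + 1))) *
    C_inv_mul_C_natCast_add_two (σ := σ) (K := K) m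

theorem X_pow_mul_X_pow_sub_planeNormalForm_mem
    (hx : C ((m : K) + 2) * X x ^ (m + 1) + X y ^ (m + 2) ∈ I)
    (hy : C ((m : K) + 2) * X x * X y ^ (m + 1) ∈ I) (i j : ℕ) :
    X x ^ i * X y ^ j - planeNormalForm m x y i j ∈ I := by
  have hc := C_inv_mul_C_natCast_add_two (σ := σ) (K := K) m
  rw [planeNormalForm]
  split_ifs with hbox hspecial
  · rw [sub_self]; exact I.zero_mem
  · obtain ⟨rfl, -⟩ := hspecial
    convert I.mul_mem_left (C ((m : K) + 2)⁻¹ * X y ^ j) hx using 1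
    linear_combination (-X x ^ (m + 1) * X y ^ j) * hc
  rw [sub_zero]
  rw [mem_box] at hbox
  by_cases hi : 1 ≤ i ∧ m + 1 ≤ j
  · exact X_pow_mul_X_pow_mem_of_le hy hi.1 hi.2
  by_cases hi0 : i = 0
  · obtain ⟨j, rfl⟩ := Nat.exists_eq_add_of_le' (show m + 2 ≤ j by omega)
    have hmem := X_pow_mul_X_pow_mem_of_le hy (i := m + 1) (j := j) (by omega) (by omega)
    convert I.sub_mem (I.mul_mem_left (X y ^ j) hx) (I.mul_mem_left (C ((m : K) + 2)) hmem)
      using 1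
    rw [hi0]; ring
  · obtain ⟨i, rfl⟩ := Nat.exists_eq_add_of_le' (show m + 1 ≤ i by omega)
    have hmem := X_pow_mul_X_pow_mem_of_le hy (i := i) (j := j + (m + 2)) (by omega) (by omega)
    convert I.mul_mem_left (C ((m : K) + 2)⁻¹)
      (I.sub_mem (I.mul_mem_left (X x ^ i * X y ^ j) hx) hmem) using 1
    linear_combination (-X x ^ (i + (m + 1)) * X y ^ j) * hc

end CharZero

section NormalForm

variable [DecidableEq σ]

variable (m x y) in
open Classical in
noncomputable def normalForm (e : σ →₀ ℕ) : MvPolynomial σ K :=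
  if TailBounded m x y e then planeNormalForm m x y (e x) (e y) * monomial (rest x y e) 1 else 0

variable (m x y) in
noncomputable def normalFormMap : MvPolynomial σ K →ₗ[K] MvPolynomial σ K :=
  (basisMonomials σ K).constr K (normalForm m x y)

theorem normalFormMap_monomial (e : σ →₀ ℕ) :
    normalFormMap (K := K) m x y (monomial e 1) = normalForm m x y e := by
  simpa [normalFormMap, coe_basisMonomials] using
    (basisMonomials σ K).constr_basis K (normalForm m x y) e

theorem normalForm_of_tailBounded {e : σ →₀ ℕ} (he : TailBounded m x y e) :
    normalForm (K := K) m x y e =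
      planeNormalForm m x y (e x) (e y) * monomial (rest x y e) 1 := by
  rw [normalForm, if_pos he]

theorem normalForm_of_not_tailBounded {e : σ →₀ ℕ} (he : ¬TailBounded m x y e) :
    normalForm (K := K) m x y e = 0 := by
  rw [normalForm, if_neg he]

theorem normalForm_of_isStandard (hxy : x ≠ y) {e : σ →₀ ℕ} (he : IsStandard m x y e) :
    normalForm (K := K) m x y e = monomial e 1 := by
  rw [normalForm_of_tailBounded he.2, planeNormalForm, if_pos he.1,
    monomial_eq_X_pow_mul_X_pow_mul hxy e]

theorem normalForm_mem_span (hxy : x ≠ y) (e : σ →₀ ℕ) :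
    normalForm m x y e ∈ Submodule.span K
      (Set.range fun e : {e // IsStandard m x y e} => (monomial e.1 1 : MvPolynomial σ K)) := by
  by_cases he : TailBounded m x y e
  swap
  · rw [normalForm_of_not_tailBounded he]; exact zero_mem _
  rw [normalForm_of_tailBounded he, planeNormalForm]
  split_ifs with hbox hspecial
  · rw [← monomial_eq_X_pow_mul_X_pow_mul hxy]
    exact Submodule.subset_span ⟨⟨e, hbox, he⟩, rfl⟩
  · set e' := single y (e y + m + 2) + rest x y e
    have he' : IsStandard m x y e' := by
      refine ⟨?_, fun i hix hiy => ?_⟩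
      · simp only [e', Finsupp.coe_add, Pi.add_apply, Finsupp.single_eq_same,
          Finsupp.single_eq_of_ne hxy, rest_apply_left, rest_apply_right, mem_box, true_and]
        omega
      · simp only [e', Finsupp.coe_add, Pi.add_apply, Finsupp.single_eq_of_ne hiy,
          rest_apply_of_ne _ hix hiy, zero_add]
        exact he i hix hiy
    have : -C ((m : K) + 2)⁻¹ * X y ^ (e y + m + 2) * monomial (rest x y e) 1 =
        (-((m : K) + 2)⁻¹) • monomial e' 1 := by
      rw [monomial_single_add, smul_eq_C_mul, C_neg]; ring
    rw [this]
    exact Submodule.smul_mem _ _ (Submodule.subset_span ⟨⟨e', he'⟩, rfl⟩)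
  · rw [zero_mul]; exact zero_mem _

theorem range_normalFormMap (hxy : x ≠ y) :
    LinearMap.range (normalFormMap m x y) = Submodule.span K
      (Set.range fun e : {e // IsStandard m x y e} => (monomial e.1 1 : MvPolynomial σ K)) := by
  rw [normalFormMap, Module.Basis.constr_range]
  refine le_antisymm (Submodule.span_le.2 ?_) (Submodule.span_le.2 ?_)
  · rintro _ ⟨e, rfl⟩
    exact normalForm_mem_span hxy e
  · rintro _ ⟨e, rfl⟩
    exact Submodule.subset_span ⟨e.1, normalForm_of_isStandard hxy e.2⟩

theorem normalFormMap_monomial_mul_right (hxy : x ≠ y) (e : σ →₀ ℕ) :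
    normalFormMap m x y (monomial e 1 * (C ((m : K) + 2) * X x * X y ^ (m + 1))) = 0 := by
  have : monomial e (1 : K) * (C ((m : K) + 2) * X x * X y ^ (m + 1)) =
      C ((m : K) + 2) * monomial (e + single x 1 + single y (m + 1)) 1 := by
    rw [monomial_add_single, monomial_add_single, pow_one]; ring
  rw [this, ← smul_eq_C_mul, map_smul, normalFormMap_monomial]
  by_cases he : TailBounded m x y e
  · rw [normalForm_of_tailBounded (by rwa [tailBounded_add_single _ (Or.inr rfl),
      tailBounded_add_single _ (Or.inl rfl)]), rest_add_single _ (Or.inr rfl),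
      rest_add_single _ (Or.inl rfl)]
    simp only [Finsupp.coe_add, Pi.add_apply, Finsupp.single_eq_same,
      Finsupp.single_eq_of_ne hxy, Finsupp.single_eq_of_ne hxy.symm, add_zero]
    rw [planeNormalForm_add_right, zero_mul, smul_zero]
  · rw [normalForm_of_not_tailBounded (by rwa [tailBounded_add_single _ (Or.inr rfl),
      tailBounded_add_single _ (Or.inl rfl)]), smul_zero]

theorem normalFormMap_monomial_mul_tail (e : σ →₀ ℕ) {i : σ} (hx : i ≠ x) (hy : i ≠ y) (c : K) :
    normalFormMap m x y (monomial e 1 * (C c * X i ^ (m + 2))) = 0 := by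
  have : monomial e (1 : K) * (C c * X i ^ (m + 2)) =
      C c * monomial (e + single i (m + 2)) 1 := by
    rw [monomial_add_single]; ring
  rw [this, ← smul_eq_C_mul, map_smul, normalFormMap_monomial, normalForm_of_not_tailBounded,
    smul_zero]
  intro h
  have := h i hx hy
  rw [Finsupp.coe_add, Pi.add_apply, Finsupp.single_eq_same] at this
  omega

variable [CharZero K]

theorem normalFormMap_monomial_mul_left (hxy : x ≠ y) (e : σ →₀ ℕ) :
    normalFormMap m x y (monomial e 1 * (C ((m : K) + 2) * X x ^ (m + 1) + X y ^ (m + 2))) =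
      0 := by
  have : monomial e (1 : K) * (C ((m : K) + 2) * X x ^ (m + 1) + X y ^ (m + 2)) =
      C ((m : K) + 2) * monomial (e + single x (m + 1)) 1 +
        monomial (e + single y (m + 2)) 1 := by
    rw [monomial_add_single, monomial_add_single]; ring
  rw [this, map_add, ← smul_eq_C_mul, map_smul, normalFormMap_monomial, normalFormMap_monomial]
  by_cases he : TailBounded m x y e
  · rw [normalForm_of_tailBounded ((tailBounded_add_single e (Or.inl rfl) _).2 he),
      normalForm_of_tailBounded ((tailBounded_add_single e (Or.inr rfl) _).2 he),
      rest_add_single _ (Or.inl rfl), rest_add_single _ (Or.inr rfl)]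
    simp only [Finsupp.coe_add, Pi.add_apply, Finsupp.single_eq_same,
      Finsupp.single_eq_of_ne hxy, Finsupp.single_eq_of_ne hxy.symm, add_zero]
    rw [smul_eq_C_mul, ← mul_assoc, ← add_mul, planeNormalForm_add_left, zero_mul]
  · rw [normalForm_of_not_tailBounded (mt (tailBounded_add_single e (Or.inl rfl) _).1 he),
      normalForm_of_not_tailBounded (mt (tailBounded_add_single e (Or.inr rfl) _).1 he),
      smul_zero, add_zero]

theorem monomial_sub_normalForm_mem (hxy : x ≠ y) {I : Ideal (MvPolynomial σ K)}
    (hx : C ((m : K) + 2) * X x ^ (m + 1) + X y ^ (m + 2) ∈ I)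
    (hy : C ((m : K) + 2) * X x * X y ^ (m + 1) ∈ I)
    (htail : ∀ i, i ≠ x → i ≠ y → X i ^ (m + 2) ∈ I) (e : σ →₀ ℕ) :
    monomial e 1 - normalForm (K := K) m x y e ∈ I := by
  by_cases he : TailBounded m x y e
  · rw [normalForm_of_tailBounded he, monomial_eq_X_pow_mul_X_pow_mul hxy e, ← sub_mul]
    exact I.mul_mem_right _ (X_pow_mul_X_pow_sub_planeNormalForm_mem hx hy _ _)
  · rw [normalForm_of_not_tailBounded he, sub_zero]
    obtain ⟨i, hix, hiy, hei⟩ : ∃ i, i ≠ x ∧ i ≠ y ∧ m + 1 < e i := by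
      simpa [TailBounded] using he
    rw [← tsub_add_cancel_of_le (Finsupp.single_le_iff.2 hei : single i (m + 2) ≤ e),
      monomial_add_single]
    exact I.mul_mem_left _ (htail i hix hiy)

variable [Fintype σ]

theorem ker_normalFormMap (hxy : x ≠ y) :
    LinearMap.ker (normalFormMap (K := K) m x y) =
      (jacobianIdeal σ (poly m x y)).restrictScalars K := by
  set J := jacobianIdeal σ (poly (K := K) m x y)
  have hJ : ∀ i, pderiv i (poly m x y) ∈ J := fun i => Ideal.subset_span ⟨i, rfl⟩
  apply le_antisymm
  · refine ker_le_of_monomial_sub_mem _ fun e => ?_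
    rw [normalFormMap_monomial]
    refine monomial_sub_normalForm_mem hxy ?_ ?_ (fun i hix hiy => ?_) e
    · simpa only [pderiv_poly_left hxy] using hJ x
    · simpa only [pderiv_poly_right hxy] using hJ y
    · have h3 : (m : K) + 3 ≠ 0 := by exact_mod_cast (m + 2).succ_ne_zero
      have hi := hJ i
      rw [pderiv_poly_of_ne hix hiy] at hi
      convert J.mul_mem_left (C ((m : K) + 3)⁻¹) hi using 1
      rw [← mul_assoc, ← C_mul, inv_mul_cancel₀ h3, C_1, one_mul]
  · intro p hp
    refine map_eq_zero_of_mem_ideal_span _ ?_ hp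
    rintro e _ ⟨i, rfl⟩
    dsimp only
    by_cases hix : i = x
    · subst hix; rw [pderiv_poly_left hxy]; exact normalFormMap_monomial_mul_left hxy e
    by_cases hiy : i = y
    · subst hiy; rw [pderiv_poly_right hxy]; exact normalFormMap_monomial_mul_right hxy e
    rw [pderiv_poly_of_ne hix hiy]
    exact normalFormMap_monomial_mul_tail e hix hiy _

variable (m) in
noncomputable def milnorBasis (hxy : x ≠ y) :
    Module.Basis {e // IsStandard m x y e} K
      (MvPolynomial σ K ⧸ jacobianIdeal σ (poly (K := K) m x y)) :=
  (Module.Basis.quotientOfKerEqOfRangeEq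
    ((basisMonomials σ K).linearIndependent.comp Subtype.val Subtype.val_injective)
    (normalFormMap m x y) (ker_normalFormMap hxy)
    (by rw [range_normalFormMap hxy, coe_basisMonomials]; rfl)).map
    (Submodule.Quotient.restrictScalarsEquiv K _)

end NormalForm

end Field

end ChainSingularity

open ChainSingularity in
/-- The Milnor algebra of `f = x₁^{d-1} + x₁ x₂^{d-1} + (x₃^d + ⋯ + xₙ^d)` is a
finite-dimensional complex vector space of dimension
`(d-1)^n - (d-1)^{n-1} + (d-1)^{n-2}`. -/
theorem stmt_3 (n d : ℕ) (hn : 2 ≤ n) (hd : 3 ≤ d)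
    (f : MvPolynomial (Fin n) ℂ)
    (hf : f = X (⟨0, by omega⟩ : Fin n) ^ (d - 1) +
        X (⟨0, by omega⟩ : Fin n) * X (⟨1, by omega⟩ : Fin n) ^ (d - 1) +
        ∑ i ∈ Finset.univ.filter (fun i : Fin n => 2 ≤ (i : ℕ)), X i ^ d)
    (J : Ideal (MvPolynomial (Fin n) ℂ))
    (hJ : J = Ideal.span (Set.range fun i : Fin n => pderiv i f)) :
    FiniteDimensional ℂ (MvPolynomial (Fin n) ℂ ⧸ J) ∧
      Module.finrank ℂ (MvPolynomial (Fin n) ℂ ⧸ J) =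
        (d - 1) ^ n - (d - 1) ^ (n - 1) + (d - 1) ^ (n - 2) := by
  obtain ⟨m, rfl⟩ : ∃ m, d = m + 3 := ⟨d - 3, by omega⟩
  set x : Fin n := ⟨0, by omega⟩
  set y : Fin n := ⟨1, by omega⟩
  have hxy : x ≠ y := by simp [x, y]
  have hpoly : f = poly m x y := by
    rw [hf, Finset.filter_congr fun (i : Fin n) _ => show 2 ≤ (i : ℕ) ↔ i ≠ x ∧ i ≠ y by
      simp [x, y, Fin.ext_iff]; omega]
    rfl
  subst hJ hpoly
  have := Finite.of_equiv _ (isStandardEquiv m hxy).symm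
  let b := milnorBasis m hxy (K := ℂ)
  refine ⟨Module.Finite.of_basis b, (Module.finrank_eq_nat_card_basis b).trans ?_⟩
  rw [natCard_isStandard hxy, Fintype.card_fin]
  obtain ⟨k, rfl⟩ : ∃ k, n = k + 2 := ⟨n - 2, by omega⟩
  have hle : (m + 2) ^ (k + 1) ≤ (m + 2) ^ (k + 2) := Nat.pow_le_pow_right (by omega) (by omega)
  simp only [Nat.add_sub_cancel, show m + 3 - 1 = m + 2 from rfl, show k + 2 - 1 = k + 1 from rfl]
  zify [hle]
  ring
end

section
/- Fix integers n ≥ 3 and d ≥ 3, and nonzero complex numbers c_2, …, c_{n-1}. Let g_0 = x_1^{d-1} + (x_3^d + ⋯ + x_{n-1}^d) + (c_2·x_2 + ⋯ + c_{n-1}·x_{n-1})^d in ℂ[x_1, …, x_{n-1}] (the sum x_3^d + ⋯ + x_{n-1}^d is empty when n = 3). Then the only common zero in ℂ^{n-1} of the partial derivatives ∂g_0/∂x_1, …, ∂g_0/∂x_{n-1} is the origin; that is, g_0 has a unique critical point, located at the origin. -/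
/-!
At `v`, with `L = ∑ cᵢ vᵢ`, the gradient of `g₀` is `(d-1) v₁^(d-2)` in `x₁`, `d L^(d-1) c₂` in `x₂`
and `d vⱼ^(d-1) + d L^(d-1) cⱼ` in `xⱼ` for `j ≥ 3`. As `c₂ ≠ 0`, the `x₂`-equation forces `L = 0`,
which decouples the others into `v₁^(d-2) = 0` and `vⱼ^(d-1) = 0`; then `0 = L = c₂ v₂` gives `v₂ = 0`.
-/

open MvPolynomial

section PDerivEval

variable {R σ : Type*} [CommSemiring R] [DecidableEq σ] (v : σ → R)

lemma eval_pderiv_X_pow (i j : σ) (k : ℕ) :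
    eval v (pderiv j (X i ^ k)) = if i = j then k * v j ^ (k - 1) else 0 := by
  split_ifs with h
  · simp [h]
  · simp [pderiv_X_of_ne h]

lemma eval_pderiv_sum_X_pow (s : Finset σ) (j : σ) (k : ℕ) :
    eval v (pderiv j (∑ i ∈ s, X i ^ k)) = if j ∈ s then k * v j ^ (k - 1) else 0 := by
  simp only [map_sum, eval_pderiv_X_pow, Finset.sum_ite_eq']

lemma eval_pderiv_linearForm_pow (s : Finset σ) (a : σ → R) (j : σ) (k : ℕ) :
    eval v (pderiv j ((∑ i ∈ s, C (a i) * X i) ^ k)) =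
      k * (∑ i ∈ s, a i * v i) ^ (k - 1) * if j ∈ s then a j else 0 := by
  by_cases hj : j ∈ s <;> simp [hj, pderiv_X, Pi.single_apply, mul_assoc]

end PDerivEval

section PrincipalPart

variable {K σ : Type*} [CommRing K]

def IsCriticalPoint (f : MvPolynomial σ K) (v : σ → K) : Prop :=
  ∀ i, eval v (pderiv i f) = 0

variable [Fintype σ] [DecidableEq σ]

/-- `i₀` and `i₁` play the roles of the paper's `x₁` and `x₂`. -/
noncomputable def principalPart (i₀ i₁ : σ) (c : σ → K) (d : ℕ) : MvPolynomial σ K :=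
  X i₀ ^ (d - 1) + ∑ i ∈ ({i₀, i₁}ᶜ : Finset σ), X i ^ d +
    (∑ i ∈ ({i₀}ᶜ : Finset σ), C (c i) * X i) ^ d

lemma eval_pderiv_principalPart (i₀ i₁ : σ) (c : σ → K) (d : ℕ) (v : σ → K) (j : σ) :
    eval v (pderiv j (principalPart i₀ i₁ c d)) =
      (if i₀ = j then ((d - 1 : ℕ) : K) * v j ^ (d - 2) else 0) +
      (if j ∈ ({i₀, i₁}ᶜ : Finset σ) then d * v j ^ (d - 1) else 0) +
      d * (∑ i ∈ ({i₀}ᶜ : Finset σ), c i * v i) ^ (d - 1) *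
        if j ∈ ({i₀}ᶜ : Finset σ) then c j else 0 := by
  simp only [principalPart, map_add, eval_pderiv_X_pow, eval_pderiv_sum_X_pow,
    eval_pderiv_linearForm_pow, Nat.sub_sub]

lemma isCriticalPoint_principalPart_zero (i₀ i₁ : σ) (c : σ → K) {d : ℕ} (hd : 3 ≤ d) :
    IsCriticalPoint (principalPart i₀ i₁ c d) 0 := by
  intro j
  rw [eval_pderiv_principalPart]
  simp [show d - 1 ≠ 0 by omega, show d - 2 ≠ 0 by omega]

variable [IsDomain K] [CharZero K]

lemma eq_zero_of_isCriticalPoint_principalPart {i₀ i₁ : σ} {c : σ → K} {d : ℕ} {v : σ → K}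
    (hi : i₀ ≠ i₁) (hc : c i₁ ≠ 0) (hd : 3 ≤ d)
    (hv : IsCriticalPoint (principalPart i₀ i₁ c d) v) : v = 0 := by
  have grad j := (eval_pderiv_principalPart i₀ i₁ c d v j).symm.trans (hv j)
  have hL : ∑ i ∈ ({i₀}ᶜ : Finset σ), c i * v i = 0 := by
    simpa [hi, hi.symm, hc, show d ≠ 0 by omega, show d - 1 ≠ 0 by omega] using grad i₁
  have hv₀ : v i₀ = 0 := by
    simpa [show d - 1 ≠ 0 by omega, show d - 2 ≠ 0 by omega] using grad i₀
  have hv₂ : ∀ j ∈ ({i₀, i₁}ᶜ : Finset σ), v j = 0 := by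
    intro j hj
    simp only [Finset.mem_compl, Finset.mem_insert, Finset.mem_singleton, not_or] at hj
    simpa [hj, Ne.symm hj.1, hL, show d ≠ 0 by omega, show d - 1 ≠ 0 by omega] using grad j
  have hv₁ : v i₁ = 0 := by
    have hL₁ : ∑ i ∈ ({i₀}ᶜ : Finset σ), c i * v i = c i₁ * v i₁ :=
      Finset.sum_eq_single_of_mem _ (by simpa using hi.symm) fun j hj hji₁ => by
        rw [hv₂ j (by simp_all), mul_zero]
    simpa [hc, hL] using hL₁.symm
  funext j
  by_cases hj₀ : j = i₀
  · exact hj₀ ▸ hv₀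
  by_cases hj₁ : j = i₁
  · exact hj₁ ▸ hv₁
  exact hv₂ j (by simp [hj₀, hj₁])

theorem isCriticalPoint_principalPart_iff {i₀ i₁ : σ} {c : σ → K} {d : ℕ}
    (hi : i₀ ≠ i₁) (hc : c i₁ ≠ 0) (hd : 3 ≤ d) (v : σ → K) :
    IsCriticalPoint (principalPart i₀ i₁ c d) v ↔ v = 0 :=
  ⟨eq_zero_of_isCriticalPoint_principalPart hi hc hd,
    fun h => h ▸ isCriticalPoint_principalPart_zero i₀ i₁ c hd⟩

end PrincipalPart

/-- The principal part `g₀ = x₁^{d-1} + (x₃^d + ⋯ + x_{n-1}^d) + (c₂x₂ + ⋯ + c_{n-1}x_{n-1})^d`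
has a unique critical point, located at the origin.  (Variable `xᵢ` is `X ⟨i-1, _⟩` of
`MvPolynomial (Fin (n-1)) ℂ`, and `c` at index `i` is `c_{i+1}`.) -/
theorem stmt_4 (n d : ℕ) (hn : 3 ≤ n) (hd : 3 ≤ d)
    (c : Fin (n - 1) → ℂ) (hc : ∀ i : Fin (n - 1), 1 ≤ (i : ℕ) → c i ≠ 0)
    (g₀ : MvPolynomial (Fin (n - 1)) ℂ)
    (hg : g₀ = X (⟨0, by omega⟩ : Fin (n - 1)) ^ (d - 1) +
        ∑ i ∈ Finset.univ.filter (fun i : Fin (n - 1) => 2 ≤ (i : ℕ)), X i ^ d +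
        (∑ i ∈ Finset.univ.filter (fun i : Fin (n - 1) => 1 ≤ (i : ℕ)), C (c i) * X i) ^ d)
    (v : Fin (n - 1) → ℂ) :
    (∀ i : Fin (n - 1), eval v (pderiv i g₀) = 0) ↔ v = 0 := by
  let i₀ : Fin (n - 1) := ⟨0, by omega⟩
  let i₁ : Fin (n - 1) := ⟨1, by omega⟩
  have hS₂ : Finset.univ.filter (fun i : Fin (n - 1) => 2 ≤ (i : ℕ)) = {i₀, i₁}ᶜ := by
    ext i
    simp only [Finset.mem_filter, Finset.mem_univ, true_and, Finset.mem_compl,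
      Finset.mem_insert, Finset.mem_singleton, Fin.ext_iff, i₀, i₁]
    omega
  have hS₁ : Finset.univ.filter (fun i : Fin (n - 1) => 1 ≤ (i : ℕ)) = {i₀}ᶜ := by
    ext i
    simp only [Finset.mem_filter, Finset.mem_univ, true_and, Finset.mem_compl,
      Finset.mem_singleton, Fin.ext_iff, i₀]
    omega
  rw [hS₂, hS₁] at hg
  subst hg
  exact isCriticalPoint_principalPart_iff (Fin.ne_of_val_ne zero_ne_one) (hc i₁ le_rfl) hd v
end

section
/- Fix an integer d ≥ 3 and let h = z_3^{d-1}·z_0 + z_3^{d-2}·z_4·z_1 + z_4^{d-1}·z_2 in ℂ[z_0, z_1, z_2, z_3, z_4]. Then the Hessian determinant of h vanishes identically: the determinant of the 5×5 matrix whose (i,j) entry is the second partial derivative ∂²h/∂z_i∂z_j is the zero polynomial. -/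
open MvPolynomial

/-! The Gordan–Noether polynomial is linear in `z₀, z₁, z₂` with coefficients in `z₃, z₄` only,
so every second derivative `∂ᵢ∂ⱼh` with `i, j ≤ 2` vanishes. The Hessian thus has a `3 × 3` zero
block in a `5 × 5` matrix, and such a matrix is singular: every permutation sends one of the three
columns of the block into one of its three rows, so each term of the Leibniz expansion has a zero
factor. -/

theorem Matrix.det_eq_zero_of_large_zero_block {n R : Type*} [Fintype n] [DecidableEq n]
    [CommRing R] (M : Matrix n n R) (S T : Finset n) (hST : Fintype.card n < S.card + T.card)
    (hM : ∀ i ∈ S, ∀ j ∈ T, M i j = 0) : M.det = 0 := by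
  rw [Matrix.det_apply]
  refine Finset.sum_eq_zero fun σ _ => ?_
  have hmeet : (S ∩ T.map σ.toEmbedding).Nonempty :=
    Finset.inter_nonempty_of_card_lt_card_add_card (Finset.subset_univ _) (Finset.subset_univ _)
      (by simpa using hST)
  obtain ⟨_, hi⟩ := hmeet
  obtain ⟨hiS, hiT⟩ := Finset.mem_inter.mp hi
  obtain ⟨j, hjT, rfl⟩ := Finset.mem_map.mp hiT
  exact smul_eq_zero_of_right _ (Finset.prod_eq_zero (Finset.mem_univ j) (hM _ hiS j hjT))

theorem pderiv_pderiv_gordanNoether_eq_zero {R : Type*} [CommSemiring R] (d : ℕ) {i j : Fin 5}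
    (hi : i ≤ 2) (hj : j ≤ 2) :
    pderiv i (pderiv j (X 3 ^ (d - 1) * X 0 + X 3 ^ (d - 2) * X 4 * X 1 + X 4 ^ (d - 1) * X 2 :
      MvPolynomial (Fin 5) R)) = 0 := by
  fin_cases i <;> fin_cases j <;> simp_all

theorem stmt_6_general (d : ℕ)
    (h : MvPolynomial (Fin 5) ℂ)
    (hh : h = X 3 ^ (d - 1) * X 0 + X 3 ^ (d - 2) * X 4 * X 1 + X 4 ^ (d - 1) * X 2) :
    Matrix.det (Matrix.of fun i j : Fin 5 => pderiv i (pderiv j h)) = 0 := by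
  refine Matrix.det_eq_zero_of_large_zero_block _ (Finset.Iic 2) (Finset.Iic 2)
    (by decide) fun i hi j hj => ?_
  rw [Matrix.of_apply, hh]
  exact pderiv_pderiv_gordanNoether_eq_zero d (Finset.mem_Iic.mp hi) (Finset.mem_Iic.mp hj)

/-- The Hessian determinant of the Gordan–Noether polynomial
`h = z₃^{d-1} z₀ + z₃^{d-2} z₄ z₁ + z₄^{d-1} z₂` vanishes identically. -/
theorem stmt_6 (d : ℕ) (hd : 3 ≤ d)
    (h : MvPolynomial (Fin 5) ℂ)
    (hh : h = X 3 ^ (d - 1) * X 0 + X 3 ^ (d - 2) * X 4 * X 1 + X 4 ^ (d - 1) * X 2) :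
    Matrix.det (Matrix.of fun i j : Fin 5 => pderiv i (pderiv j h)) = 0 :=
  stmt_6_general d h hh
end

section
/- Fix an integer d ≥ 3 and let h = z_3^{d-1}·z_0 + z_3^{d-2}·z_4·z_1 + z_4^{d-1}·z_2 in ℂ[z_0, z_1, z_2, z_3, z_4]. Then the five partial derivatives ∂h/∂z_0, …, ∂h/∂z_4 are linearly independent over ℂ: if a_0, …, a_4 ∈ ℂ satisfy a_0·∂h/∂z_0 + ⋯ + a_4·∂h/∂z_4 = 0 as a polynomial, then a_0 = ⋯ = a_4 = 0. -/
/-!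
Evaluate a vanishing combination `∑ gᵢ ∂ᵢh` at points with few nonzero coordinates. At `e₃`
and `e₄` only `∂₀h = z₃^{d-1}`, respectively `∂₂h = z₄^{d-1}`, survive; at `e₃ + e₄` only
`∂₀h, ∂₁h, ∂₂h`; and at `e₀ + e₃`, `e₂ + e₄` the partials `∂₃h`, `∂₄h` enter with the factor
`d - 1 ≠ 0`. Solving this triangular system gives `g = 0`.
-/

open MvPolynomial

noncomputable def gordanNoether (R : Type*) [CommSemiring R] (d : ℕ) : MvPolynomial (Fin 5) R :=
  X 3 ^ (d - 1) * X 0 + X 3 ^ (d - 2) * X 4 * X 1 + X 4 ^ (d - 1) * X 2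

section

variable {R : Type*}

theorem pderiv_gordanNoether [CommSemiring R] (d : ℕ) (i : Fin 5) :
    pderiv i (gordanNoether R d) =
      ![X 3 ^ (d - 1), X 3 ^ (d - 2) * X 4, X 4 ^ (d - 1),
        (d - 1) • (X 3 ^ (d - 2) * X 0) + (d - 2) • (X 3 ^ (d - 3) * X 4 * X 1),
        X 3 ^ (d - 2) * X 1 + (d - 1) • (X 4 ^ (d - 2) * X 2)] i := by
  fin_cases i <;> simp [gordanNoether, pderiv_X, Nat.sub_sub, nsmul_eq_mul] <;> ring

theorem linearIndependent_pderiv_gordanNoether [CommRing R] [NoZeroDivisors R] [CharZero R]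
    {d : ℕ} (hd : 3 ≤ d) : LinearIndependent R (fun i => pderiv i (gordanNoether R d)) := by
  refine Fintype.linearIndependent_iff.mpr fun g hg => ?_
  have heval (x : Fin 5 → R) : ∑ i, g i * eval x (pderiv i (gordanNoether R d)) = 0 := by
    simpa only [map_sum, smul_eval, map_zero] using congrArg (eval x) hg
  have hd1 : d - 1 ≠ 0 := by omega
  have hd2 : d - 2 ≠ 0 := by omega
  have hcast : ((d - 1 : ℕ) : R) ≠ 0 := Nat.cast_ne_zero.mpr hd1
  have h0 : g 0 = 0 := by
    simpa [Fin.sum_univ_five, pderiv_gordanNoether, hd1, hd2] using heval ![0, 0, 0, 1, 0]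
  have h2 : g 2 = 0 := by
    simpa [Fin.sum_univ_five, pderiv_gordanNoether, hd1, hd2] using heval ![0, 0, 0, 0, 1]
  have h1 : g 1 = 0 := by
    simpa [Fin.sum_univ_five, pderiv_gordanNoether, h0, h2] using heval ![0, 0, 0, 1, 1]
  have h3 : g 3 = 0 := by
    simpa [Fin.sum_univ_five, pderiv_gordanNoether, hd1, hd2, h0, hcast]
      using heval ![1, 0, 0, 1, 0]
  have h4 : g 4 = 0 := by
    simpa [Fin.sum_univ_five, pderiv_gordanNoether, hd1, hd2, h2, hcast]
      using heval ![0, 0, 1, 0, 1]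
  intro i
  fin_cases i
  exacts [h0, h1, h2, h3, h4]

end

/-- The partial derivatives of the Gordan–Noether polynomial
`h = z₃^{d-1} z₀ + z₃^{d-2} z₄ z₁ + z₄^{d-1} z₂` are linearly independent over `ℂ`,
i.e. `V(h)` is not a cone. -/
theorem stmt_7 (d : ℕ) (hd : 3 ≤ d)
    (h : MvPolynomial (Fin 5) ℂ)
    (hh : h = X 3 ^ (d - 1) * X 0 + X 3 ^ (d - 2) * X 4 * X 1 + X 4 ^ (d - 1) * X 2)
    (a : Fin 5 → ℂ) (ha : ∑ i : Fin 5, C (a i) * pderiv i h = 0) :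
    a = 0 := by
  subst hh
  have hsmul : ∑ i, a i • pderiv i (gordanNoether ℂ d) = 0 := by
    simpa only [gordanNoether, C_mul'] using ha
  exact funext <|
    Fintype.linearIndependent_iff.mp (linearIndependent_pderiv_gordanNoether hd) a hsmul
end

section
/- Fix integers n ≥ 2 and d ≥ 2, and define homogeneous polynomials h_0, …, h_n of degree d−1 in ℂ[z_0, …, z_n] by h_n = z_0^{d-1}, h_{n-1} = 2·z_0^{d-2}·z_1, and h_{n-i} = 2·z_0^{d-2}·z_i + z_{i-1}^{d-1} for i = 2, …, n. Suppose v, w ∈ ℂ^{n+1} satisfy v_0 ≠ 0 and w_0 ≠ 0, and there exists a nonzero λ ∈ ℂ with h_j(v) = λ·h_j(w) for every j = 0, …, n. Then there exists a nonzero μ ∈ ℂ with v = μ·w. -/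
/-!
Put `μ = v₀ / w₀`. Comparing `hₙ = z₀^{d-1}` forces `λ = μ^{d-1}`. Then, going down from
`h_{n-1}` to `h_0`, the relation for `h_{n-i}` is linear in `v_i` with the nonzero leading
coefficient `2 v₀^{d-2}`, and once `v_{i-1} = μ w_{i-1}` is known the extra term
`z_{i-1}^{d-1}` scales by exactly `λ`; this leaves `v_i = μ w_i`.
-/

open MvPolynomial

theorem eq_mul_of_mul_add_eq_pow_mul {R : Type*} [CommRing R] [IsDomain R] (k : ℕ) {c μ w₀ x y s t : R}
    (hc : c * (μ * w₀) ^ k ≠ 0) (hst : s = μ ^ (k + 1) * t)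
    (h : c * (μ * w₀) ^ k * x + s = μ ^ (k + 1) * (c * w₀ ^ k * y + t)) :
    x = μ * y :=
  mul_left_cancel₀ hc (by linear_combination h - hst)

/-- Example 18: the rational map `z ↦ (h₀ : ⋯ : hₙ)` is injective on `{z₀ ≠ 0}`,
where `hₙ = z₀^{d-1}`, `h_{n-1} = 2 z₀^{d-2} z₁`,
`h_{n-i} = 2 z₀^{d-2} zᵢ + z_{i-1}^{d-1}` for `i = 2, …, n`. -/
theorem stmt_10 (n d : ℕ) (hd : 2 ≤ d)
    (H : ℕ → MvPolynomial (Fin (n + 1)) ℂ)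
    (hHn : H n = X 0 ^ (d - 1))
    (hHn1 : H (n - 1) = 2 * X 0 ^ (d - 2) * X 1)
    (hHi : ∀ i, 2 ≤ i → ∀ hi : i ≤ n,
      H (n - i) = 2 * X 0 ^ (d - 2) * X (⟨i, by omega⟩ : Fin (n + 1)) +
        X (⟨i - 1, by omega⟩ : Fin (n + 1)) ^ (d - 1))
    (v w : Fin (n + 1) → ℂ) (hv0 : v 0 ≠ 0) (hw0 : w 0 ≠ 0)
    (lam : ℂ)
    (heq : ∀ j, j ≤ n → eval v (H j) = lam * eval w (H j)) :
    ∃ μ : ℂ, μ ≠ 0 ∧ v = μ • w := by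
  obtain ⟨k, rfl⟩ : ∃ k, d = k + 2 := ⟨d - 2, by omega⟩
  simp only [Nat.reduceSubDiff, Nat.add_sub_cancel] at hHn hHn1 hHi
  set μ := v 0 / w 0
  have hv : v 0 = μ * w 0 := (div_mul_cancel₀ _ hw0).symm
  have hlam : lam = μ ^ (k + 1) := by
    have h := heq n le_rfl
    simp only [hHn, eval_pow, eval_X, hv, mul_pow] at h
    exact (mul_right_cancel₀ (pow_ne_zero _ hw0) h).symm
  have hc : (2 : ℂ) * (μ * w 0) ^ k ≠ 0 := by
    rw [← hv]
    exact mul_ne_zero two_ne_zero (pow_ne_zero _ hv0)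
  have step : ∀ i (hi : i + 1 ≤ n), v ⟨i, by omega⟩ = μ * w ⟨i, by omega⟩ →
      v ⟨i + 1, by omega⟩ = μ * w ⟨i + 1, by omega⟩ := by
    rintro (_ | i) hi hprev
    · have h := heq (n - 1) (by omega)
      simp only [hHn1, eval_mul, eval_pow, eval_X, eval_ofNat, hv, hlam] at h
      have hone : (⟨1, by omega⟩ : Fin (n + 1)) = 1 :=
        Fin.ext (Nat.mod_eq_of_lt (by omega)).symm
      rw [hone]
      exact eq_mul_of_mul_add_eq_pow_mul k hc (mul_zero _).symm (by linear_combination h)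
    · have h := heq (n - (i + 2)) (by omega)
      simp only [hHi (i + 2) (by omega) (by omega), eval_add, eval_mul, eval_pow, eval_X,
        eval_ofNat, Nat.reduceSubDiff, hv, hlam] at h
      exact eq_mul_of_mul_add_eq_pow_mul k hc (by rw [hprev, mul_pow]) h
  refine ⟨μ, div_ne_zero hv0 hw0, funext fun ⟨i, hi⟩ => ?_⟩
  induction i with
  | zero => exact hv
  | succ i ih => exact step i (by omega) (ih (by omega))
end

section
/- Let h = z_0·(z_1² + z_0·z_2) = z_0·z_1² + z_0²·z_2 in ℂ[z_0, z_1, z_2], with gradient (∂h/∂z_0, ∂h/∂z_1, ∂h/∂z_2) = (z_1² + 2·z_0·z_2, 2·z_0·z_1, z_0²). Then for every (a, b, c) ∈ ℂ³ with c ≠ 0, there is exactly one point of ℙ², i.e. exactly one nonzero vector v ∈ ℂ³ up to nonzero scalar multiple, for which there exists a nonzero t ∈ ℂ with (∂h/∂z_0)(v) = t·a, (∂h/∂z_1)(v) = t·b, and (∂h/∂z_2)(v) = t·c. -/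
open MvPolynomial

/-!
The gradient map `z ↦ (z₁² + 2z₀z₂ : 2z₀z₁ : z₀²)` of `z₀(z₁² + z₀z₂)` is inverted by
`(a : b : c) ↦ (8c² : 4bc : 4ac - b²)` wherever `c ≠ 0`. Indeed, if the gradient at `w` is
`t(a, b, c)` with `t ≠ 0`, then `w₀² = tc ≠ 0`, and eliminating `t` from the other two
equations and cancelling `w₀` gives `8c² w = w₀ (8c², 4bc, 4ac - b²)`.
-/

/-- `v` is a preimage, up to scalar, of the point `(a : b : c)` under the gradient map
of `h`, witnessed by a nonzero scalar `t`. -/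
def IsGradPreimage (h : MvPolynomial (Fin 3) ℂ) (a b c : ℂ) (v : Fin 3 → ℂ) : Prop :=
  v ≠ 0 ∧ ∃ t : ℂ, t ≠ 0 ∧
    eval v (pderiv 0 h) = t * a ∧ eval v (pderiv 1 h) = t * b ∧ eval v (pderiv 2 h) = t * c

namespace TangentConic

variable {R K : Type*} [CommRing R] [Field K]

noncomputable def poly : MvPolynomial (Fin 3) R := X 0 * X 1 ^ 2 + X 0 ^ 2 * X 2

def grad (v : Fin 3 → R) : Fin 3 → R := ![v 1 ^ 2 + 2 * v 0 * v 2, 2 * v 0 * v 1, v 0 ^ 2]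

def fiberPoint (a b c : R) : Fin 3 → R := ![8 * c ^ 2, 4 * b * c, 4 * a * c - b ^ 2]

theorem eval_pderiv_poly (v : Fin 3 → R) (i : Fin 3) :
    eval v (pderiv i (poly : MvPolynomial (Fin 3) R)) = grad v i := by
  fin_cases i <;> simp [poly, grad] <;> ring

theorem grad_fiberPoint (a b c : R) :
    grad (fiberPoint a b c) = (64 * c ^ 3) • ![a, b, c] := by
  ext i
  fin_cases i <;> simp [grad, fiberPoint] <;> ring

theorem fiberPoint_ne_zero (h2 : (2 : K) ≠ 0) {c : K} (hc : c ≠ 0) (a b : K) :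
    fiberPoint a b c ≠ 0 := by
  intro h
  have h0 : (8 * c ^ 2 : K) = 0 := congrFun h 0
  have h8 : (8 : K) = 2 ^ 3 := by norm_num
  simp_all

theorem smul_eq_smul_fiberPoint {a b c t : K} {w : Fin 3 → K} (hc : c ≠ 0) (ht : t ≠ 0)
    (hw : grad w = t • ![a, b, c]) :
    w 0 ≠ 0 ∧ (8 * c ^ 2) • w = w 0 • fiberPoint a b c := by
  have e0 : w 1 ^ 2 + 2 * w 0 * w 2 = t * a := congrFun hw 0
  have e1 : 2 * w 0 * w 1 = t * b := congrFun hw 1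
  have e2 : w 0 ^ 2 = t * c := congrFun hw 2
  have hw0 : w 0 ≠ 0 := fun h ↦ mul_ne_zero ht hc (by rw [← e2, h, zero_pow two_ne_zero])
  have hw1 : 2 * c * w 1 = b * w 0 :=
    mul_left_cancel₀ hw0 (by linear_combination c * e1 - b * e2)
  have hw2 : 8 * c ^ 2 * w 2 = (4 * a * c - b ^ 2) * w 0 :=
    mul_left_cancel₀ hw0 <| by
      linear_combination 4 * c ^ 2 * e0 - (2 * c * w 1 + b * w 0) * hw1 - 4 * a * c * e2
  refine ⟨hw0, ?_⟩
  ext i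
  fin_cases i
  · simp [fiberPoint, mul_comm]
  · simp [fiberPoint]; linear_combination 4 * c * hw1
  · simp [fiberPoint]; linear_combination hw2

theorem isGradPreimage_poly_iff {a b c : ℂ} {v : Fin 3 → ℂ} :
    IsGradPreimage poly a b c v ↔ v ≠ 0 ∧ ∃ t : ℂ, t ≠ 0 ∧ grad v = t • ![a, b, c] := by
  simp only [IsGradPreimage, eval_pderiv_poly, funext_iff, Fin.forall_fin_succ]
  simp [grad]

end TangentConic

/-- The gradient map of the homaloidal curve `h = z₀(z₁² + z₀z₂)` has exactly one
preimage in `ℙ²` over every point `(a : b : c)` with `c ≠ 0`. -/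
theorem stmt_12 (h : MvPolynomial (Fin 3) ℂ)
    (hh : h = X 0 * X 1 ^ 2 + X 0 ^ 2 * X 2)
    (a b c : ℂ) (hc : c ≠ 0) :
    ∃ v : Fin 3 → ℂ, IsGradPreimage h a b c v ∧
      ∀ w : Fin 3 → ℂ, IsGradPreimage h a b c w → ∃ μ : ℂ, μ ≠ 0 ∧ w = μ • v := by
  have h8 : (8 * c ^ 2 : ℂ) ≠ 0 := mul_ne_zero (by norm_num) (pow_ne_zero 2 hc)
  change h = TangentConic.poly at hh
  subst hh
  refine ⟨TangentConic.fiberPoint a b c, TangentConic.isGradPreimage_poly_iff.2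
    ⟨TangentConic.fiberPoint_ne_zero two_ne_zero hc a b, 64 * c ^ 3, by simp [hc],
      TangentConic.grad_fiberPoint a b c⟩, fun w hw ↦ ?_⟩
  obtain ⟨-, t, ht, hwt⟩ := TangentConic.isGradPreimage_poly_iff.1 hw
  obtain ⟨hw0, hsmul⟩ := TangentConic.smul_eq_smul_fiberPoint hc ht hwt
  refine ⟨w 0 / (8 * c ^ 2), div_ne_zero hw0 h8, ?_⟩
  rw [div_eq_inv_mul, mul_smul, ← hsmul, inv_smul_smul₀ h8]
end

section
/- Let h = z_1³ + z_0²·z_2 in ℂ[z_0, z_1, z_2], with gradient (∂h/∂z_0, ∂h/∂z_1, ∂h/∂z_2) = (2·z_0·z_2, 3·z_1², z_0²). Then for every (a, b, c) ∈ ℂ³ with b ≠ 0 and c ≠ 0, there are exactly two points of ℙ², i.e. exactly two nonzero vectors v ∈ ℂ³ up to nonzero scalar multiple, for which there exists a nonzero t ∈ ℂ with (∂h/∂z_0)(v) = t·a, (∂h/∂z_1)(v) = t·b, and (∂h/∂z_2)(v) = t·c. -/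
/-! Since `∂h/∂z₂ = z₀²` and `c ≠ 0`, every preimage of `(a : b : c)` has `z₀ ≠ 0`, so it can be
normalised to `z₀ = 1`. Then `2 z₂ = a / c` and `3 z₁² = b / c` determine `z₂` and `z₁` up to the
sign of a square root of `b / (3c)`, which is nonzero because `b ≠ 0`: there are exactly
two preimages. -/

open MvPolynomial

section Gradient

variable {R : Type*} [CommRing R] (v : Fin 3 → R)

lemma eval_pderiv_zero_cusp :
    eval v (pderiv 0 (X 1 ^ 3 + X 0 ^ 2 * X 2 : MvPolynomial (Fin 3) R)) = 2 * v 0 * v 2 := by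
  simp [pderiv_X]
  ring

lemma eval_pderiv_one_cusp :
    eval v (pderiv 1 (X 1 ^ 3 + X 0 ^ 2 * X 2 : MvPolynomial (Fin 3) R)) = 3 * v 1 ^ 2 := by
  simp [pderiv_X]

lemma eval_pderiv_two_cusp :
    eval v (pderiv 2 (X 1 ^ 3 + X 0 ^ 2 * X 2 : MvPolynomial (Fin 3) R)) = v 0 ^ 2 := by
  simp [pderiv_X]

end Gradient

lemma eq_of_vecCons_one_eq_smul {R : Type*} [Semiring R] {μ x y x' y' : R}
    (h : ![1, x, y] = μ • ![1, x', y']) : x = x' ∧ y = y' := by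
  have hμ : μ = 1 := by simpa using (congrFun h 0).symm
  subst hμ
  simpa using h

lemma isGradPreimage_cusp_iff {a b c : ℂ} (hc : c ≠ 0) (v : Fin 3 → ℂ) :
    IsGradPreimage (X 1 ^ 3 + X 0 ^ 2 * X 2) a b c v ↔
      ∃ μ s : ℂ, μ ≠ 0 ∧ s ^ 2 = b / (3 * c) ∧ v = μ • ![1, s, a / (2 * c)] := by
  simp only [IsGradPreimage, eval_pderiv_zero_cusp, eval_pderiv_one_cusp, eval_pderiv_two_cusp]
  constructor
  · rintro ⟨-, t, ht, h0, h1, h2⟩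
    have hv0 : v 0 ≠ 0 := fun hv0 ↦ mul_ne_zero ht hc (by rw [← h2, hv0, zero_pow two_ne_zero])
    refine ⟨v 0, v 1 / v 0, hv0, ?_, funext fun i ↦ ?_⟩
    · field_simp
      linear_combination c * h1 - b * h2
    · fin_cases i
      · simp
      · simp [mul_div_cancel₀ _ hv0]
      · simp only [Fin.reduceFinMk, Fin.isValue, Pi.smul_apply, Matrix.cons_val, smul_eq_mul]
        field_simp
        exact mul_left_cancel₀ hv0 (by linear_combination c * h0 - a * h2)
  · rintro ⟨μ, s, hμ, hs, rfl⟩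
    refine ⟨fun h ↦ hμ (by simpa using congrFun h 0), μ ^ 2 / c, by positivity, ?_, ?_, ?_⟩
    · simp only [Fin.isValue, Pi.smul_apply, Matrix.cons_val, smul_eq_mul]
      field_simp
    · simp only [Fin.isValue, Pi.smul_apply, Matrix.cons_val, smul_eq_mul, mul_pow, hs]
      field_simp
    · simp only [Fin.isValue, Pi.smul_apply, Matrix.cons_val, smul_eq_mul]
      field_simp

/-- The gradient map of the cuspidal cubic `h = z₁³ + z₀²z₂` has exactly two
preimages in `ℙ²` over every point `(a : b : c)` with `b ≠ 0` and `c ≠ 0`. -/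
theorem stmt_13 (h : MvPolynomial (Fin 3) ℂ)
    (hh : h = X 1 ^ 3 + X 0 ^ 2 * X 2)
    (a b c : ℂ) (hb : b ≠ 0) (hc : c ≠ 0) :
    ∃ v₁ v₂ : Fin 3 → ℂ, IsGradPreimage h a b c v₁ ∧ IsGradPreimage h a b c v₂ ∧
      (¬ ∃ μ : ℂ, μ ≠ 0 ∧ v₂ = μ • v₁) ∧
      ∀ w : Fin 3 → ℂ, IsGradPreimage h a b c w →
        (∃ μ : ℂ, μ ≠ 0 ∧ w = μ • v₁) ∨ (∃ μ : ℂ, μ ≠ 0 ∧ w = μ • v₂) := by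
  subst hh
  obtain ⟨s, hs⟩ := IsAlgClosed.exists_pow_nat_eq (b / (3 * c)) two_pos
  have hs0 : s ≠ 0 := by
    rintro rfl
    exact div_ne_zero hb (mul_ne_zero three_ne_zero hc) (hs.symm.trans (zero_pow two_ne_zero))
  refine ⟨![1, s, a / (2 * c)], ![1, -s, a / (2 * c)],
    (isGradPreimage_cusp_iff hc _).2 ⟨1, s, one_ne_zero, hs, (one_smul _ _).symm⟩,
    (isGradPreimage_cusp_iff hc _).2 ⟨1, -s, one_ne_zero, by rw [neg_sq, hs], (one_smul _ _).symm⟩,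
    ?_, ?_⟩
  · rintro ⟨μ, -, hμ⟩
    exact hs0 (neg_eq_self.1 (eq_of_vecCons_one_eq_smul hμ).1)
  · intro w hw
    obtain ⟨μ, s', hμ, hs', rfl⟩ := (isGradPreimage_cusp_iff hc w).1 hw
    rcases sq_eq_sq_iff_eq_or_eq_neg.1 (hs'.trans hs.symm) with rfl | rfl
    exacts [Or.inl ⟨μ, hμ, rfl⟩, Or.inr ⟨μ, hμ, rfl⟩]
end
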